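/- arXiv:1604.01978 — 2 statements merged into one kernel-verified Lean document; each statement's English description precedes it below -/
import Mathlib

section
/- Let φ(x) = ρ(d(x, D̄)²), where ρ : ℝ₊ → ℝ₊ is C¹, increasing, equal to the identity on [0, 4r₀²] and constant equal to 9r₀² on [9r₀², ∞), and D satisfies the exterior sphere condition (A) with constant r₀. Then for all x, y within distance 2r₀ of D̄, ⟨∇φ(x), x - y⟩ ≥ -2ρ'(d(x,D̄)²)·( ⟨y - π(y), x - π(x)⟩ + (1/(8r₀)) |π(x) - π(y)|² |x - π(x)| ), where π denotes the metric projection onto D̄. -/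
/-!
The heart of the matter is Federer's observation that unique nearest points on the open
`R`-neighbourhood of a closed set `K` force the normal rays to be "free" up to length `R`: if
`p = π x` and `n = (x - p) / d(x, K)`, then `d(p + t n, K) = t` for every `t < R`. Nearest-point
uniqueness makes `π` continuous, and the distance function then grows at rate almost `1` along
a discretised normal flow started at `x`; the flow stays near the ray, so the ray point has
distance `t` in the limit. For `z ∈ K` the inequality `t ≤ ‖p + t n - z‖`, expanded and sent to
`t → R`, gives `2 R ⟪x - p, z - p⟫ ≤ ‖z - p‖² ‖x - p‖`. Taking `z = π y`, the gradient inequality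
is this bound multiplied by `2 ρ' ≥ 0`, after the identity
`x - y = (x - π x) + (π x - π y) - (y - π y)`.
-/

open RealInnerProductSpace

open Metric Filter Set Topology

theorem accPt_Ici_of_le {α : Type*} [LinearOrder α] [TopologicalSpace α] [OrderTopology α]
    [DenselyOrdered α] [NoMaxOrder α] {a s : α} (h : a ≤ s) : AccPt s (𝓟 (Ici a)) :=
  accPt_principal_iff_nhdsWithin.mpr <| (nhdsGT_neBot s).mono <|
    nhdsWithin_mono _ fun _ ht => ⟨h.trans (le_of_lt ht), ne_of_gt ht⟩

theorem infDist_lt_of_mem_closedBall {α : Type*} [PseudoMetricSpace α] {K : Set α} {x w : α}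
    {S R : ℝ} (hw : w ∈ closedBall x S) (hxS : infDist x K + S < R) : infDist w K < R :=
  (infDist_le_infDist_add_dist.trans (add_le_add_right (mem_closedBall.mp hw) _)).trans_lt hxS

section InnerProductSpace

variable {E : Type*} [NormedAddCommGroup E] [InnerProductSpace ℝ E]

theorem sq_sub_le_norm_add_smul_sub_sq {u z z' m : E} {δ h : ℝ} (hm : ‖m‖ = 1)
    (hu : u - z = δ • m) (hδ : 0 < δ) (hh : 0 ≤ h) (hz' : δ ≤ ‖u - z'‖) :
    (δ + h) ^ 2 - h * ‖z - z'‖ ^ 2 / δ ≤ ‖u + h • m - z'‖ ^ 2 := by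
  have hsplit : ∀ t : ℝ,
      ‖(z - z') + t • m‖ ^ 2 = ‖z - z'‖ ^ 2 + 2 * t * ⟪z - z', m⟫ + t ^ 2 := by
    intro t
    rw [norm_add_sq_real, real_inner_smul_right, norm_smul, hm, Real.norm_eq_abs, mul_one,
      sq_abs]
    ring
  have hu' : u - z' = (z - z') + δ • m := by rw [← hu]; abel
  have hstep : u + h • m - z' = (z - z') + (δ + h) • m := by rw [add_smul, ← hu]; abel
  have hinner : -(‖z - z'‖ ^ 2 / δ) ≤ 2 * ⟪z - z', m⟫ := by
    have := pow_le_pow_left₀ hδ.le hz' 2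
    rw [hu', hsplit] at this
    rw [neg_le, le_div_iff₀ hδ]
    linarith
  rw [hstep, hsplit, mul_div_assoc]
  nlinarith [mul_le_mul_of_nonneg_left hinner (add_pos_of_pos_of_nonneg hδ hh).le,
    div_mul_cancel₀ (‖z - z'‖ ^ 2) hδ.ne']

/-- A point `w` within `T - r` of `x` and almost `T` away from `p`, where `‖x - p‖ = r`, is close
to the point at distance `T` from `p` on the ray through `x`. -/
theorem norm_sub_sq_le_of_le_norm_sub {p x w : E} {r T δ : ℝ} (hr : 0 < r) (hx : ‖x - p‖ = r)
    (hw : ‖w - x‖ ≤ T - r) (hδ : δ ≤ T) (hwp : T - δ ≤ ‖w - p‖) :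
    ‖w - (p + (T / r) • (x - p))‖ ^ 2 ≤ 2 * T * δ * (T - r) / r := by
  set q := (T - r) / r with hq
  have hq0 : 0 ≤ q := div_nonneg ((norm_nonneg _).trans hw) hr.le
  have hT : T = r + q * r := by rw [hq]; field_simp; ring
  have hwc : w - (p + (T / r) • (x - p)) = (w - x) - q • (x - p) := by
    rw [show T / r = 1 + q by rw [hq]; field_simp; ring, add_smul, one_smul]; abel
  have hwp' : w - p = (w - x) + (x - p) := by abel
  have hlow := pow_le_pow_left₀ (sub_nonneg.mpr hδ) hwp 2
  have hA := pow_le_pow_left₀ (norm_nonneg _) hw 2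
  rw [hwp', norm_add_sq_real, hx] at hlow
  rw [hwc, norm_sub_sq_real, real_inner_smul_right, norm_smul, hx, Real.norm_eq_abs,
    abs_of_nonneg hq0, show 2 * T * δ * (T - r) / r = 2 * T * δ * q by rw [hq]; ring]
  clear_value q
  subst hT
  nlinarith [mul_le_mul_of_nonneg_left hlow hq0,
    mul_le_mul_of_nonneg_left hA (by positivity : (0 : ℝ) ≤ 1 + q), mul_nonneg hq0 (sq_nonneg δ)]

end InnerProductSpace

structure IsUniqueNearestPointOn {α : Type*} [MetricSpace α] (K : Set α) (R : ℝ) (π : α → α) :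
    Prop where
  mem : ∀ w, infDist w K < R → π w ∈ K
  dist_eq : ∀ w, infDist w K < R → dist w (π w) = infDist w K
  unique : ∀ w, infDist w K < R → ∀ z ∈ K, dist w z = infDist w K → z = π w

noncomputable def normalStep {E : Type*} [NormedAddCommGroup E] [NormedSpace ℝ E] (K : Set E)
    (π : E → E) (h : ℝ) (u : E) : E :=
  u + (h / infDist u K) • (u - π u)

namespace IsUniqueNearestPointOn

theorem continuousAt {α : Type*} [MetricSpace α] [ProperSpace α] {K : Set α} {R : ℝ}
    {π : α → α} (hπ : IsUniqueNearestPointOn K R π) (hK : IsClosed K) {w : α}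
    (hw : infDist w K < R) : ContinuousAt π w := by
  have hnear : ∀ ε > 0, ∀ᶠ v in 𝓝 w, π v ∈ K ∩ closedBall w (infDist w K + ε) := by
    intro ε hε
    have hU : ∀ᶠ v in 𝓝 w, infDist v K < R :=
      (continuous_infDist_pt K).continuousAt.eventually_lt continuousAt_const hw
    filter_upwards [hU, ball_mem_nhds w (half_pos hε)] with v hvR hvw
    rw [mem_ball] at hvw
    refine ⟨hπ.mem v hvR, ?_⟩
    calc dist (π v) w ≤ dist v (π v) + dist v w := dist_triangle_left _ _ _
      _ = infDist v K + dist v w := by rw [hπ.dist_eq v hvR]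
      _ ≤ infDist w K + dist v w + dist v w := by gcongr; exact infDist_le_infDist_add_dist
      _ ≤ infDist w K + ε := by linarith
  refine (isCompact_closedBall w (infDist w K + 1)).tendsto_nhds_of_unique_mapClusterPt
    ((hnear 1 one_pos).mono fun v hv => hv.2) fun a _ ha => ?_
  have haK : ∀ ε > 0, a ∈ K ∩ closedBall w (infDist w K + ε) := fun ε hε =>
    (hK.inter isClosed_closedBall).mem_of_mapClusterPt ha (hnear ε hε)
  have hdist : dist w a ≤ infDist w K :=
    le_of_forall_pos_le_add fun ε hε => by simpa [dist_comm] using (haK ε hε).2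
  exact hπ.unique w hw a (haK 1 one_pos).1
    (le_antisymm hdist (infDist_le_dist_of_mem (haK 1 one_pos).1))

section NormedSpace

variable {E : Type*} [NormedAddCommGroup E] {K : Set E} {R : ℝ} {π : E → E}

theorem norm_sub_eq (hπ : IsUniqueNearestPointOn K R π) {w : E} (hw : infDist w K < R) :
    ‖w - π w‖ = infDist w K := by
  rw [← dist_eq_norm, hπ.dist_eq w hw]

theorem dist_normalStep [NormedSpace ℝ E] (hπ : IsUniqueNearestPointOn K R π) {u : E} {h : ℝ}
    (hu : 0 < infDist u K) (huR : infDist u K < R) (hh : 0 ≤ h) :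
    dist (normalStep K π h u) u = h := by
  rw [normalStep, dist_eq_norm, add_sub_cancel_left, norm_smul, hπ.norm_sub_eq huR,
    Real.norm_eq_abs, abs_of_nonneg (div_nonneg hh hu.le), div_mul_cancel₀ h hu.ne']

end NormedSpace

variable {E : Type*} [NormedAddCommGroup E] [InnerProductSpace ℝ E] {K : Set E} {R : ℝ}
  {π : E → E}

theorem infDist_add_le_infDist_normalStep (hπ : IsUniqueNearestPointOn K R π) {u : E}
    {h β : ℝ} (hu : 0 < infDist u K) (huR : infDist u K < R)
    (hstepR : infDist (normalStep K π h u) K < R) (hh : 0 ≤ h) (hβ1 : β ≤ 1)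
    (hdπ : dist (π u) (π (normalStep K π h u)) ^ 2 ≤ β * infDist u K ^ 2) :
    infDist u K + h * (1 - β) ≤ infDist (normalStep K π h u) K := by
  set δ := infDist u K
  set u' := normalStep K π h u
  set m := δ⁻¹ • (u - π u)
  have hum : u - π u = δ • m := by rw [smul_smul, mul_inv_cancel₀ hu.ne', one_smul]
  have hm : ‖m‖ = 1 := by
    rw [norm_smul, hπ.norm_sub_eq huR, norm_inv, Real.norm_of_nonneg hu.le,
      inv_mul_cancel₀ hu.ne']
  have hu' : u' = u + h • m := by rw [smul_smul, ← div_eq_mul_inv]; rfl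
  have hgeom := sq_sub_le_norm_add_smul_sub_sq hm hum hu hh
    (dist_eq_norm u _ ▸ infDist_le_dist_of_mem (hπ.mem u' hstepR))
  rw [← hu', hπ.norm_sub_eq hstepR, ← dist_eq_norm] at hgeom
  have hβ0 : 0 ≤ β := nonneg_of_mul_nonneg_left ((sq_nonneg _).trans hdπ) (by positivity)
  have hdπ' : h * dist (π u) (π u') ^ 2 / δ ≤ h * β * δ := by
    rw [div_le_iff₀ hu]; nlinarith [mul_le_mul_of_nonneg_left hdπ hh]
  have hsq : (δ + h * (1 - β)) ^ 2 ≤ infDist u' K ^ 2 := by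
    nlinarith [mul_nonneg (mul_nonneg hh hβ0) hu.le, mul_nonneg (mul_nonneg hh hh) hβ0]
  exact (pow_le_pow_iff_left₀ (by nlinarith) infDist_nonneg two_ne_zero).mp hsq

theorem norm_iterate_normalStep_sub_le_and_le_infDist (hπ : IsUniqueNearestPointOn K R π)
    {x : E} (hx : 0 < infDist x K) {S h β : ℝ} (hxS : infDist x K + S < R) (hh : 0 ≤ h)
    (hβ : 0 ≤ β) (hβ1 : β ≤ 1)
    (hmod : ∀ v ∈ closedBall x S, ∀ v' ∈ closedBall x S, dist v' v = h →
      dist (π v) (π v') ^ 2 ≤ β * infDist x K ^ 2)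
    (k : ℕ) (hk : k * h ≤ S) :
    ‖(normalStep K π h)^[k] x - x‖ ≤ k * h ∧
      infDist x K + k * h * (1 - β) ≤ infDist ((normalStep K π h)^[k] x) K := by
  have hball : ∀ w ∈ closedBall x S, infDist w K < R := fun _ hw =>
    infDist_lt_of_mem_closedBall hw hxS
  induction k with
  | zero => simp
  | succ k ih =>
    set w := (normalStep K π h)^[k] x
    rw [Function.iterate_succ_apply']
    push_cast at hk ⊢
    obtain ⟨hdist, hgrowth⟩ := ih (by nlinarith)
    have hw : w ∈ closedBall x S := mem_closedBall_iff_norm.mpr (by nlinarith)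
    have hx_le : infDist x K ≤ infDist w K := by
      nlinarith [mul_nonneg (mul_nonneg k.cast_nonneg hh) (sub_nonneg.mpr hβ1)]
    have hpos : 0 < infDist w K := hx.trans_le hx_le
    have hstep := hπ.dist_normalStep hpos (hball w hw) hh
    have hdist' : ‖normalStep K π h w - x‖ ≤ (k + 1) * h := by
      calc ‖normalStep K π h w - x‖ ≤ dist (normalStep K π h w) w + ‖w - x‖ := by
            rw [dist_eq_norm]; exact norm_sub_le_norm_sub_add_norm_sub _ _ _
        _ ≤ (k + 1) * h := by rw [hstep]; linarith
    have hw' : normalStep K π h w ∈ closedBall x S :=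
      mem_closedBall_iff_norm.mpr (hdist'.trans hk)
    have hdπ : dist (π w) (π (normalStep K π h w)) ^ 2 ≤ β * infDist w K ^ 2 :=
      (hmod w hw _ hw' hstep).trans (by gcongr)
    have := hπ.infDist_add_le_infDist_normalStep hpos (hball w hw) (hball _ hw') hh hβ1 hdπ
    exact ⟨hdist', by linarith⟩

variable [ProperSpace E]

/-- Euler scheme for the normal flow: `N` steps of length `S / N`, with `S / N` below the modulus
of uniform continuity of `π` on `closedBall x S`. -/
theorem exists_norm_sub_le_infDist_ge (hπ : IsUniqueNearestPointOn K R π) (hK : IsClosed K)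
    {x : E} (hx : 0 < infDist x K) {S β : ℝ} (hS : 0 ≤ S) (hxS : infDist x K + S < R)
    (hβ : 0 < β) (hβ1 : β ≤ 1) :
    ∃ w, ‖w - x‖ ≤ S ∧ infDist x K + S * (1 - β) ≤ infDist w K := by
  have hball : ∀ w ∈ closedBall x S, infDist w K < R := fun _ hw =>
    infDist_lt_of_mem_closedBall hw hxS
  obtain ⟨η, hη, hπη⟩ := Metric.uniformContinuousOn_iff.mp
    ((isCompact_closedBall x S).uniformContinuousOn_of_continuous
      (continuousOn_of_forall_continuousAt fun w hw => hπ.continuousAt hK (hball w hw)))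
    (√β * infDist x K) (by positivity)
  obtain ⟨N, hN⟩ := exists_nat_gt (S / η)
  have hN0 : (0 : ℝ) < N := (div_nonneg hS hη.le).trans_lt hN
  have hNη : S / N < η := by rwa [div_lt_iff₀ hN0, mul_comm, ← div_lt_iff₀ hη]
  have hNS : N * (S / N) = S := mul_div_cancel₀ S hN0.ne'
  have hmod : ∀ v ∈ closedBall x S, ∀ v' ∈ closedBall x S, dist v' v = S / N →
      dist (π v) (π v') ^ 2 ≤ β * infDist x K ^ 2 := fun v hv v' hv' hvv' => by
    have := hπη v hv v' hv' (by rw [dist_comm, hvv']; exact hNη)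
    calc dist (π v) (π v') ^ 2 ≤ (√β * infDist x K) ^ 2 := by gcongr
      _ = β * infDist x K ^ 2 := by rw [mul_pow, Real.sq_sqrt hβ.le]
  obtain ⟨hdist, hgrowth⟩ := hπ.norm_iterate_normalStep_sub_le_and_le_infDist hx hxS
    (div_nonneg hS hN0.le) hβ.le hβ1 hmod N hNS.le
  rw [hNS] at hdist hgrowth
  exact ⟨_, hdist, hgrowth⟩

theorem le_infDist_ray (hπ : IsUniqueNearestPointOn K R π) (hK : IsClosed K) {x : E}
    (hx : 0 < infDist x K) {T : ℝ} (hxT : infDist x K < T) (hTR : T < R) :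
    T ≤ infDist (π x + (T / infDist x K) • (x - π x)) K := by
  set r := infDist x K
  set c := π x + (T / r) • (x - π x)
  have hbound : ∀ β ∈ Ioc (0 : ℝ) 1,
      T - (T - r) * β - √(2 * T * ((T - r) * β) * (T - r) / r) ≤ infDist c K := by
    rintro β ⟨hβ, hβ1⟩
    obtain ⟨w, hwx, hw⟩ := hπ.exists_norm_sub_le_infDist_ge hK hx (sub_nonneg.mpr hxT.le)
      (by rwa [add_sub_cancel]) hβ hβ1
    have hwp : T - (T - r) * β ≤ ‖w - π x‖ := by
      rw [← dist_eq_norm]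
      linarith [infDist_le_dist_of_mem (x := w) (hπ.mem x (hxT.trans hTR))]
    have hwc := norm_sub_sq_le_of_le_norm_sub hx (hπ.norm_sub_eq (hxT.trans hTR)) hwx
      (by nlinarith) hwp
    have hwc' : dist w c ≤ √(2 * T * ((T - r) * β) * (T - r) / r) := by
      rw [dist_eq_norm]; exact Real.le_sqrt_of_sq_le hwc
    linarith [infDist_le_infDist_add_dist (x := w) (y := c) (s := K)]
  have hclosed : IsClosed
      {β : ℝ | T - (T - r) * β - √(2 * T * ((T - r) * β) * (T - r) / r) ≤ infDist c K} :=
    isClosed_le (by fun_prop) continuous_const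
  have h0 := hclosed.closure_subset_iff.mpr hbound
    (closure_Ioc (zero_ne_one' ℝ) ▸ left_mem_Icc.mpr zero_le_one)
  simpa using h0

theorem two_mul_mul_inner_le (hπ : IsUniqueNearestPointOn K R π) (hK : IsClosed K) {x z : E}
    (hx : infDist x K < R) (hz : z ∈ K) :
    2 * R * ⟪x - π x, z - π x⟫ ≤ ‖z - π x‖ ^ 2 * ‖x - π x‖ := by
  rw [hπ.norm_sub_eq hx]
  rcases (infDist_nonneg (x := x) (s := K)).eq_or_lt with h0 | hpos
  · have hxπ : x - π x = 0 := by rw [← norm_eq_zero, hπ.norm_sub_eq hx, ← h0]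
    simp [hxπ, ← h0]
  set r := infDist x K
  have hT : ∀ T ∈ Ioo r R, 2 * T * ⟪x - π x, z - π x⟫ ≤ ‖z - π x‖ ^ 2 * r := by
    rintro T ⟨hrT, hTR⟩
    have hray := (hπ.le_infDist_ray hK hpos hrT hTR).trans (infDist_le_dist_of_mem hz)
    rw [dist_eq_norm, show π x + (T / r) • (x - π x) - z = (π x - z) + (T / r) • (x - π x) by
      abel] at hray
    have hsq := pow_le_pow_left₀ (hpos.trans hrT).le hray 2
    rw [norm_add_sq_real, real_inner_smul_right, norm_smul, hπ.norm_sub_eq hx,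
      Real.norm_of_nonneg (div_pos (hpos.trans hrT) hpos).le, div_mul_cancel₀ T hpos.ne',
      norm_sub_rev, ← neg_sub z, inner_neg_left, real_inner_comm] at hsq
    have hle : 2 * (T / r) * ⟪x - π x, z - π x⟫ ≤ ‖z - π x‖ ^ 2 := by linarith
    calc 2 * T * ⟪x - π x, z - π x⟫ = 2 * (T / r) * ⟪x - π x, z - π x⟫ * r := by
          field_simp [hpos.ne']
      _ ≤ ‖z - π x‖ ^ 2 * r := mul_le_mul_of_nonneg_right hle hpos.le
  have hclosed : IsClosed {T : ℝ | 2 * T * ⟪x - π x, z - π x⟫ ≤ ‖z - π x‖ ^ 2 * r} :=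
    isClosed_le (by fun_prop) continuous_const
  exact hclosed.closure_subset_iff.mpr hT
    (closure_Ioo hx.ne ▸ right_mem_Icc.mpr hx.le)

theorem inner_sub_add_inner_add_nonneg (hπ : IsUniqueNearestPointOn K R π) (hK : IsClosed K)
    {x y : E} (hx : infDist x K < R) (hy : infDist y K < R) :
    0 ≤ ⟪x - π x, x - y⟫ + ⟪y - π y, x - π x⟫ + ‖π x - π y‖ ^ 2 * ‖x - π x‖ / (2 * R) := by
  have hR : 0 < R := infDist_nonneg.trans_lt hx
  have hkey := hπ.two_mul_mul_inner_le hK hx (hπ.mem y hy)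
  rw [← le_div_iff₀' (by positivity), norm_sub_rev] at hkey
  have hsplit : ⟪x - π x, x - y⟫ + ⟪y - π y, x - π x⟫
      = ‖x - π x‖ ^ 2 - ⟪x - π x, π y - π x⟫ := by
    rw [real_inner_comm (x - π x) (y - π y), ← real_inner_self_eq_norm_sq, ← inner_add_right,
      ← inner_sub_right]
    congr 1
    abel
  nlinarith [sq_nonneg ‖x - π x‖]

end IsUniqueNearestPointOn

theorem gradient_penalty_function_inequality_general {d : ℕ}
    (D : Set (EuclideanSpace ℝ (Fin d))) (r₀ : ℝ)
    (π : EuclideanSpace ℝ (Fin d) → EuclideanSpace ℝ (Fin d))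
    (hπ_mem : ∀ w, Metric.infDist w (closure D) < 4 * r₀ → π w ∈ closure D)
    (hπ_dist : ∀ w, Metric.infDist w (closure D) < 4 * r₀ →
      dist w (π w) = Metric.infDist w (closure D))
    (hπ_unique : ∀ w, Metric.infDist w (closure D) < 4 * r₀ →
      ∀ z ∈ closure D, dist w z = Metric.infDist w (closure D) → z = π w)
    -- the truncation function ρ and its derivative ρ'
    (ρ ρ' : ℝ → ℝ) (hρ_deriv : ∀ s, HasDerivAt ρ (ρ' s) s)
    (hρ_mono : MonotoneOn ρ (Set.Ici 0))
    (gradφ : EuclideanSpace ℝ (Fin d) → EuclideanSpace ℝ (Fin d))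
    (hgrad_formula : ∀ w, Metric.infDist w (closure D) < 4 * r₀ →
      gradφ w = (2 * ρ' (Metric.infDist w (closure D) ^ 2)) • (w - π w)) :
    ∀ x y : EuclideanSpace ℝ (Fin d),
      Metric.infDist x (closure D) < 2 * r₀ → Metric.infDist y (closure D) < 2 * r₀ →
      ⟪gradφ x, x - y⟫ ≥ -2 * ρ' (Metric.infDist x (closure D) ^ 2) *
        (⟪y - π y, x - π x⟫ + (1 / (8 * r₀)) * ‖π x - π y‖ ^ 2 * ‖x - π x‖) := by
  intro x y hx hy
  have hr₀ : 0 < r₀ := by linarith [infDist_nonneg (x := x) (s := closure D)]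
  have hx4 : infDist x (closure D) < 4 * r₀ := by linarith
  have hy4 : infDist y (closure D) < 4 * r₀ := by linarith
  have hπ : IsUniqueNearestPointOn (closure D) (4 * r₀) π := ⟨hπ_mem, hπ_dist, hπ_unique⟩
  have hρ' : 0 ≤ ρ' (infDist x (closure D) ^ 2) :=
    (hρ_deriv _).hasDerivWithinAt.nonneg_of_monotoneOn (accPt_Ici_of_le (sq_nonneg _)) hρ_mono
  have hkey := hπ.inner_sub_add_inner_add_nonneg isClosed_closure hx4 hy4
  rw [hgrad_formula x hx4, real_inner_smul_left,
    show (1 / (8 * r₀)) * ‖π x - π y‖ ^ 2 * ‖x - π x‖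
      = ‖π x - π y‖ ^ 2 * ‖x - π x‖ / (2 * (4 * r₀)) by ring]
  nlinarith [mul_nonneg hρ' hkey]

theorem gradient_penalty_function_inequality {d : ℕ}
    (D : Set (EuclideanSpace ℝ (Fin d))) (r₀ : ℝ) (hr₀ : 0 < r₀)
    (π : EuclideanSpace ℝ (Fin d) → EuclideanSpace ℝ (Fin d))
    (hπ_mem : ∀ w, Metric.infDist w (closure D) < 4 * r₀ → π w ∈ closure D)
    (hπ_dist : ∀ w, Metric.infDist w (closure D) < 4 * r₀ →
      dist w (π w) = Metric.infDist w (closure D))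
    (hπ_unique : ∀ w, Metric.infDist w (closure D) < 4 * r₀ →
      ∀ z ∈ closure D, dist w z = Metric.infDist w (closure D) → z = π w)
    -- condition (A) and its one-sided quadratic consequence
    (hA : ∀ p ∈ frontier D, ∀ m : EuclideanSpace ℝ (Fin d), ‖m‖ = 1 →
      Metric.ball (p - (4 * r₀) • m) (4 * r₀) ∩ D = ∅ →
      ∀ y ∈ closure D, ⟪y - p, m⟫ ≥ -(1 / (8 * r₀)) * ‖y - p‖ ^ 2)
    -- the truncation function ρ and its derivative ρ'
    (ρ ρ' : ℝ → ℝ) (hρ_deriv : ∀ s, HasDerivAt ρ (ρ' s) s)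
    (hρ_mono : MonotoneOn ρ (Set.Ici 0))
    (hρ_id : ∀ s ∈ Set.Icc (0 : ℝ) (4 * r₀ ^ 2), ρ s = s)
    (hρ_const : ∀ s ∈ Set.Ici (9 * r₀ ^ 2), ρ s = 9 * r₀ ^ 2)
    -- φ(x) = ρ(d(x, D̄)²) with gradient 2 ρ'(d(x,D̄)²) (x − π(x)) near D̄
    (φ : EuclideanSpace ℝ (Fin d) → ℝ)
    (hφ : ∀ w, φ w = ρ (Metric.infDist w (closure D) ^ 2))
    (gradφ : EuclideanSpace ℝ (Fin d) → EuclideanSpace ℝ (Fin d))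
    (hgradφ : ∀ w, HasGradientAt φ (gradφ w) w)
    (hgrad_formula : ∀ w, Metric.infDist w (closure D) < 4 * r₀ →
      gradφ w = (2 * ρ' (Metric.infDist w (closure D) ^ 2)) • (w - π w)) :
    ∀ x y : EuclideanSpace ℝ (Fin d),
      Metric.infDist x (closure D) < 2 * r₀ → Metric.infDist y (closure D) < 2 * r₀ →
      ⟪gradφ x, x - y⟫ ≥ -2 * ρ' (Metric.infDist x (closure D) ^ 2) *
        (⟪y - π y, x - π x⟫ + (1 / (8 * r₀)) * ‖π x - π y‖ ^ 2 * ‖x - π x‖) :=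
  gradient_penalty_function_inequality_general D r₀ π hπ_mem hπ_dist hπ_unique ρ ρ' hρ_deriv hρ_mono
    gradφ hgrad_formula
end

section
/- (Maximum principle via support and submartingale property.) Let X be a continuous E-valued process with X(0) = x₀, u : E → ℝ continuous and bounded with u(X(t∧τ)) a submartingale for every stopping time τ, and u(x₀) = max u. Suppose y ∈ E lies in the topological support of the law of X(t₁) restricted to paths reachable by the process, in the sense that for every ε > 0, P(|X(t₁ ∧ τ_y) − y| < ε) > 0 where τ_y is the hitting time of the ε-ball around y. If u(y) < u(x₀), then one derives a contradiction: therefore u(y) = u(x₀) for every such y. -/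
/-!
Stop the process at the first time `τ` it comes `ε`-close to `y`, where `ε` is so small that
`u < u x₀` on the `ε`-ball around `y`. Then `u (X (t₁ ∧ τ)) ≤ u x₀` everywhere, with strict
inequality on the event `{d(X (t₁ ∧ τ), y) < ε}`, which has positive probability by the support
condition. Hence `E[u (X (t₁ ∧ τ))] < u x₀`, contradicting the submartingale inequality.
-/

open MeasureTheory

theorem integral_lt_integral_of_ae_le_of_measure_setOf_lt_ne_zero {Ω : Type*}
    {m0 : MeasurableSpace Ω} {μ : Measure Ω} {f g : Ω → ℝ} (hf : Integrable f μ)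
    (hg : Integrable g μ) (hfg : f ≤ᵐ[μ] g) (hlt : μ {ω | f ω < g ω} ≠ 0) :
    ∫ ω, f ω ∂μ < ∫ ω, g ω ∂μ := by
  have hpos : 0 < ∫ ω, (g - f) ω ∂μ := by
    refine (integral_pos_iff_support_of_nonneg_ae ?_ (hg.sub hf)).2 ?_
    · filter_upwards [hfg] with ω hω using sub_nonneg.2 hω
    · refine (pos_iff_ne_zero.2 hlt).trans_le (measure_mono fun ω hω => ?_)
      exact sub_ne_zero.2 (ne_of_gt hω)
  rw [integral_sub' hg hf] at hpos
  linarith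

theorem MeasureTheory.StronglyAdapted.stronglyMeasurable_stoppedValue_min_const {Ω E : Type*}
    {m0 : MeasurableSpace Ω} [MetricSpace E] {𝔉 : Filtration ℝ m0} {X : ℝ → Ω → E}
    (hX : StronglyAdapted 𝔉 X) (hXcont : ∀ ω, Continuous fun s => X s ω) {τ : Ω → ℝ}
    (hτ : IsStoppingTime 𝔉 fun ω => (τ ω : WithTop ℝ)) (t : ℝ) :
    StronglyMeasurable fun ω => X (min t (τ ω)) ω := by
  have h := stronglyMeasurable_stoppedValue_of_le (hX.isStronglyProgressive_of_continuous hXcont)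
    (hτ.min_const t) fun ω => min_le_right _ _
  convert h.mono (𝔉.le t) using 2 with ω
  simp only [stoppedValue, min_comm]
  rfl

theorem maximum_principle_via_support_general
    {Ω E : Type*} {m0 : MeasurableSpace Ω} [MetricSpace E]
    (μ : Measure Ω) [IsProbabilityMeasure μ] (𝔉 : Filtration ℝ m0)
    (X : ℝ → Ω → E)
    (hXcont : ∀ ω, Continuous fun s => X s ω)
    (hXadapted : StronglyAdapted 𝔉 X)
    (x₀ : E)
    (u : E → ℝ) (hu_cont : Continuous u) (hu_bdd : ∃ Cb : ℝ, ∀ e, |u e| ≤ Cb)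
    -- u(x₀) is the maximum of u
    (hmaxu : ∀ e : E, u e ≤ u x₀)
    -- submartingale property: E[u(X(t ∧ τ))] ≥ u(x₀) for every stopping time τ
    (hsub : ∀ τ : Ω → ℝ, IsStoppingTime 𝔉 (fun ω => (τ ω : WithTop ℝ)) → (∀ ω, 0 ≤ τ ω) →
      ∀ s : ℝ, 0 ≤ s → u x₀ ≤ ∫ ω, u (X (min s (τ ω)) ω) ∂μ)
    (t₁ : ℝ) (ht₁ : 0 < t₁) (y : E)
    -- τ_y(ε) = inf{t ≥ 0 : d(X(t), y) < ε} is a stopping time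
    (hstop : ∀ ε > (0 : ℝ),
      IsStoppingTime 𝔉 fun ω => ((sInf {s : ℝ | 0 ≤ s ∧ dist (X s ω) y < ε} : ℝ) : WithTop ℝ))
    -- support condition: P(|X(t₁ ∧ τ_y) − y| < ε) > 0 for every ε > 0
    (hsupp : ∀ ε > (0 : ℝ),
      0 < μ {ω | dist
        (X (min t₁ (sInf {s : ℝ | 0 ≤ s ∧ dist (X s ω) y < ε})) ω) y < ε}) :
    u y = u x₀ := by
  refine (hmaxu y).antisymm (not_lt.1 fun hylt => ?_)
  obtain ⟨ε, hε, hball⟩ := Metric.eventually_nhds_iff.1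
    (hu_cont.continuousAt.eventually_lt continuousAt_const hylt)
  set τ : Ω → ℝ := fun ω => sInf {s : ℝ | 0 ≤ s ∧ dist (X s ω) y < ε}
  have hτ : IsStoppingTime 𝔉 fun ω => (τ ω : WithTop ℝ) := hstop ε hε
  have hτ_nonneg : ∀ ω, 0 ≤ τ ω := fun ω => Real.sInf_nonneg fun s hs => hs.1
  set f : Ω → ℝ := fun ω => u (X (min t₁ (τ ω)) ω)
  obtain ⟨C, hC⟩ := hu_bdd
  have hf : Integrable f μ := .of_bound (hu_cont.comp_stronglyMeasurable
    (hXadapted.stronglyMeasurable_stoppedValue_min_const hXcont hτ t₁)).aestronglyMeasurable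
    C (ae_of_all _ fun ω => hC _)
  have hf_lt : ∫ ω, f ω ∂μ < u x₀ := by
    have hlt : μ {ω | f ω < u x₀} ≠ 0 :=
      ((hsupp ε hε).trans_le (measure_mono fun ω hω => hball hω)).ne'
    simpa using integral_lt_integral_of_ae_le_of_measure_setOf_lt_ne_zero hf
      (integrable_const (u x₀)) (ae_of_all _ fun ω => hmaxu _) hlt
  exact (hsub τ hτ hτ_nonneg t₁ ht₁.le).not_gt hf_lt

theorem maximum_principle_via_support
    {Ω E : Type*} {m0 : MeasurableSpace Ω} [MetricSpace E]
    (μ : Measure Ω) [IsProbabilityMeasure μ] (𝔉 : Filtration ℝ m0)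
    (X : ℝ → Ω → E)
    (hXcont : ∀ ω, Continuous fun s => X s ω)
    (hXadapted : StronglyAdapted 𝔉 X)
    (x₀ : E) (hX0 : ∀ ω, X 0 ω = x₀)
    (u : E → ℝ) (hu_cont : Continuous u) (hu_bdd : ∃ Cb : ℝ, ∀ e, |u e| ≤ Cb)
    -- u(x₀) is the maximum of u
    (hmaxu : ∀ e : E, u e ≤ u x₀)
    -- submartingale property: E[u(X(t ∧ τ))] ≥ u(x₀) for every stopping time τ
    (hsub : ∀ τ : Ω → ℝ, IsStoppingTime 𝔉 (fun ω => (τ ω : WithTop ℝ)) → (∀ ω, 0 ≤ τ ω) →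
      ∀ s : ℝ, 0 ≤ s → u x₀ ≤ ∫ ω, u (X (min s (τ ω)) ω) ∂μ)
    (t₁ : ℝ) (ht₁ : 0 < t₁) (y : E)
    -- τ_y(ε) = inf{t ≥ 0 : d(X(t), y) < ε} is a stopping time
    (hstop : ∀ ε > (0 : ℝ),
      IsStoppingTime 𝔉 fun ω => ((sInf {s : ℝ | 0 ≤ s ∧ dist (X s ω) y < ε} : ℝ) : WithTop ℝ))
    -- support condition: P(|X(t₁ ∧ τ_y) − y| < ε) > 0 for every ε > 0
    (hsupp : ∀ ε > (0 : ℝ),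
      0 < μ {ω | dist
        (X (min t₁ (sInf {s : ℝ | 0 ≤ s ∧ dist (X s ω) y < ε})) ω) y < ε}) :
    u y = u x₀ :=
  maximum_principle_via_support_general μ 𝔉 X hXcont hXadapted x₀ u hu_cont hu_bdd hmaxu hsub t₁ ht₁
    y hstop hsupp
end
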